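/- Let A be a finite-dimensional anti-commutative CB-algebra over a field F of characteristic different from 2 such that dim(A/A²) = 2. Then A³ = 0, i.e., x·(y·z) = 0 for all x, y, z ∈ A. -/

import Mathlib

/-- `A² = span {x·y : x, y ∈ A}`. -/
def algSquare {F A : Type*} [Field F] [AddCommGroup A] [Module F A]
    (mul : A →ₗ[F] A →ₗ[F] A) : Submodule F A :=
  Submodule.span F {w : A | ∃ x y : A, w = mul x y}

/-- `A³ = span {u·a : u ∈ A², a ∈ A}`. -/
def algCube {F A : Type*} [Field F] [AddCommGroup A] [Module F A]
    (mul : A →ₗ[F] A →ₗ[F] A) : Submodule F A :=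
  Submodule.span F {w : A | ∃ u ∈ algSquare mul, ∃ a : A, w = mul u a}

/-!
In an anticommutative CB-algebra every left multiplication squares to zero,
`x·(x·z) = -(x·z)·x = 0`, so the maps `L_x` anticommute and factor through the exterior algebra
of `A`: a product of more than `dim A` of them vanishes. Anticommutation also makes the
annihilator `{n | d·n = 0}` of any `d` an ideal.

Choose `a, b` spanning `A` modulo `A²`, put `c = a·b` and let `N` be the ideal generated by `c`.
Expanding products shows `A² ⊆ N + A·A²`; iterating and using the nilpotency of the `L_x`
gives `A² ⊆ N`. Now `a·c = b·c = c·c = 0`, and `u·c = -c·u = 0` for `u ∈ A² ⊆ N`, so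
`x·c = 0` for every `x ∈ A`; hence `x` annihilates `N ⊇ A²`.
-/

open Module Submodule

theorem le_of_le_sup_apply {α : Type*} [SemilatticeSup α] [OrderBot α] {T : α → α}
    (hT : Monotone T) {N V : α} (hN : ∀ W, T (N ⊔ W) ≤ N ⊔ T W) (hV : V ≤ N ⊔ T V) {n : ℕ}
    (hn : T^[n] V = ⊥) : V ≤ N := by
  have hNk : ∀ k W, T^[k] (N ⊔ W) ≤ N ⊔ T^[k] W := by
    intro k
    induction k with
    | zero => exact fun _ => le_rfl
    | succ k ih =>
      intro W
      rw [Function.iterate_succ_apply, Function.iterate_succ_apply]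
      exact (hT.iterate k (hN W)).trans (ih (T W))
  have hVk : ∀ k, V ≤ N ⊔ T^[k] V := by
    intro k
    induction k with
    | zero => exact le_sup_right
    | succ k ih =>
      calc V ≤ N ⊔ T^[k] V := ih
        _ ≤ N ⊔ T^[k] (N ⊔ T V) := sup_le_sup_left (hT.iterate k hV) N
        _ ≤ N ⊔ (N ⊔ T^[k + 1] V) := sup_le_sup_left (hNk k (T V)) N
        _ = N ⊔ T^[k + 1] V := by rw [← sup_assoc, sup_idem]
  simpa [hn] using hVk n

section LeftMultiplication

variable {F A : Type*} [Field F] [AddCommGroup A] [Module F A] (mul : A →ₗ[F] A →ₗ[F] A)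

theorem leftMul_anticomm (hsq : ∀ x, mul x * mul x = 0) (x y : A) :
    mul x * mul y = -(mul y * mul x) := by
  have h := hsq (x + y)
  simp only [map_add, add_mul, mul_add, hsq] at h
  rw [eq_neg_iff_add_eq_zero]
  linear_combination (norm := abel) h

theorem prod_ofFn_leftMul_eq_zero [FiniteDimensional F A] (hsq : ∀ x, mul x * mul x = 0)
    {n : ℕ} (hn : finrank F A < n) (v : Fin n → A) :
    (List.ofFn fun i => mul (v i)).prod = 0 := by
  have hv : ¬ LinearIndependent F v := fun h => by
    simpa using (h.fintype_card_le_finrank.trans_lt hn)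
  have h := congrArg (ExteriorAlgebra.lift F ⟨mul, hsq⟩)
    ((ExteriorAlgebra.ιMulti F n).map_linearDependent v hv)
  simpa [ExteriorAlgebra.ιMulti_apply, map_list_prod, List.map_ofFn, Function.comp_def] using h

theorem iterate_map₂_le_iSup (n : ℕ) (W : Submodule F A) :
    (map₂ mul ⊤ ·)^[n] W ≤ ⨆ v : Fin n → A, W.map (List.ofFn fun i => mul (v i)).prod := by
  induction n with
  | zero => simp [Module.End.one_eq_id]
  | succ n ih =>
    rw [Function.iterate_succ_apply']
    refine (map₂_le_map₂_right ih).trans (map₂_le.mpr fun x _ w hw => ?_)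
    have hxw := mem_map_of_mem (f := mul x) hw
    rw [Submodule.map_iSup] at hxw
    refine SetLike.le_def.mp (iSup_le fun v => ?_) hxw
    refine le_iSup_of_le (Fin.cons x v : Fin (n + 1) → A) ?_
    simp [List.ofFn_succ, Module.End.mul_eq_comp, Submodule.map_comp]

theorem iterate_map₂_eq_bot [FiniteDimensional F A] (hsq : ∀ x, mul x * mul x = 0) {n : ℕ}
    (hn : finrank F A < n) (W : Submodule F A) : (map₂ mul ⊤ ·)^[n] W = ⊥ :=
  eq_bot_iff.mpr <| (iterate_map₂_le_iSup mul n W).trans <| iSup_le fun v => by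
    simp [prod_ofFn_leftMul_eq_zero mul hsq hn v]

theorem map₂_ker_le_ker (hsq : ∀ x, mul x * mul x = 0) (d : A) :
    map₂ mul ⊤ (LinearMap.ker (mul d)) ≤ LinearMap.ker (mul d) :=
  map₂_le.mpr fun x _ n hn => by
    rw [LinearMap.mem_ker] at hn ⊢
    rw [← Module.End.mul_apply, leftMul_anticomm mul hsq, LinearMap.neg_apply,
      Module.End.mul_apply, hn, map_zero, neg_zero]

def leftIdealSpan (c : A) : Submodule F A :=
  sInf {S | c ∈ S ∧ map₂ mul ⊤ S ≤ S}

theorem mem_leftIdealSpan_self (c : A) : c ∈ leftIdealSpan mul c :=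
  mem_sInf.mpr fun _ hS => hS.1

theorem map₂_leftIdealSpan_le (c : A) : map₂ mul ⊤ (leftIdealSpan mul c) ≤ leftIdealSpan mul c :=
  le_sInf fun _ hS => (map₂_le_map₂_right (sInf_le hS)).trans hS.2

theorem leftIdealSpan_le {c : A} {S : Submodule F A} (hc : c ∈ S) (hS : map₂ mul ⊤ S ≤ S) :
    leftIdealSpan mul c ≤ S :=
  sInf_le ⟨hc, hS⟩

theorem leftIdealSpan_le_ker (hsq : ∀ x, mul x * mul x = 0) {c d : A} (hdc : mul d c = 0) :
    leftIdealSpan mul c ≤ LinearMap.ker (mul d) :=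
  leftIdealSpan_le mul hdc (map₂_ker_le_ker mul hsq d)

end LeftMultiplication

theorem exists_sup_span_pair_eq_top {F A : Type*} [Field F] [AddCommGroup A] [Module F A]
    {S : Submodule F A} (h : finrank F (A ⧸ S) = 2) :
    ∃ a b : A, S ⊔ span F {a, b} = ⊤ := by
  have : Module.Finite F (A ⧸ S) := Module.finite_of_finrank_eq_succ h
  let e := Module.finBasisOfFinrankEq F (A ⧸ S) h
  obtain ⟨a, ha⟩ := S.mkQ_surjective (e 0)
  obtain ⟨b, hb⟩ := S.mkQ_surjective (e 1)
  refine ⟨a, b, ?_⟩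
  rw [← Submodule.map_mkQ_eq_top, Submodule.map_span, Set.image_pair, ha, hb, ← e.span_eq]
  congr 1
  ext
  simp [Fin.exists_fin_two, eq_comm]

section AntiCommutative

variable {F A : Type*} [Field F] [AddCommGroup A] [Module F A] (mul : A →ₗ[F] A →ₗ[F] A)

theorem algSquare_eq_map₂ : algSquare mul = map₂ mul ⊤ ⊤ := by
  rw [map₂_eq_span_image2, algSquare]
  congr 1
  ext
  simp [eq_comm]

variable {mul} (hac : mul.IsAlt)
include hac

theorem algSquare_le_sup_map₂ {a b : A} (hab : algSquare mul ⊔ span F {a, b} = ⊤) :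
    algSquare mul ≤ span F {mul a b} ⊔ map₂ mul ⊤ (algSquare mul) := by
  have hpair : map₂ mul (span F {a, b}) (span F {a, b}) ≤ span F {mul a b} := by
    rw [map₂_span_span, span_le]
    rintro _ ⟨x, hx, y, hy, rfl⟩
    simp only [SetLike.mem_coe]
    rcases hx with rfl | rfl <;> rcases hy with rfl | rfl
    · simp [hac.self_eq_zero]
    · exact mem_span_singleton_self _
    · rw [← neg_mem_iff, hac.neg]; exact mem_span_singleton_self _
    · simp [hac.self_eq_zero]
  have hleft (P : Submodule F A) : map₂ mul (algSquare mul) P ≤ map₂ mul ⊤ (algSquare mul) :=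
    map₂_le.mpr fun u hu y _ => by
      rw [← hac.neg]; exact neg_mem (apply_mem_map₂ mul mem_top hu)
  conv_lhs => rw [algSquare_eq_map₂, ← hab, map₂_sup_left, map₂_sup_right, map₂_sup_right]
  refine sup_le (sup_le (hleft _) (hleft _) |>.trans le_sup_right) (sup_le ?_ ?_)
  · exact (map₂_le_map₂_left le_top).trans le_sup_right
  · exact hpair.trans le_sup_left

variable [FiniteDimensional F A] (hsq : ∀ x, mul x * mul x = 0)
include hsq

theorem algSquare_le_leftIdealSpan {a b : A} (hab : algSquare mul ⊔ span F {a, b} = ⊤) :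
    algSquare mul ≤ leftIdealSpan mul (mul a b) := by
  refine le_of_le_sup_apply (T := (map₂ mul ⊤ ·)) (fun _ _ h => map₂_le_map₂_right h)
    (fun W => ?_) ?_ (iterate_map₂_eq_bot mul hsq (Nat.lt_succ_self _) _)
  · rw [map₂_sup_right]
    exact sup_le_sup_right (map₂_leftIdealSpan_le mul _) _
  · refine (algSquare_le_sup_map₂ hac hab).trans (sup_le_sup_right ?_ _)
    exact span_le.mpr (Set.singleton_subset_iff.mpr (mem_leftIdealSpan_self mul _))

theorem map₂_algSquare_eq_bot {a b : A} (hab : algSquare mul ⊔ span F {a, b} = ⊤) :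
    map₂ mul ⊤ (algSquare mul) = ⊥ := by
  set c := mul a b
  have hsqN := algSquare_le_leftIdealSpan hac hsq hab
  have hcN : leftIdealSpan mul c ≤ LinearMap.ker (mul c) := leftIdealSpan_le_ker mul hsq (hac c)
  have hxc : ∀ x, mul x c = 0 := by
    suffices ⊤ ≤ LinearMap.ker (mul.flip c) from fun x => this mem_top
    rw [← hab, sup_le_iff, span_le, Set.insert_subset_iff, Set.singleton_subset_iff]
    refine ⟨fun u hu => ?_, ?_, ?_⟩
    · rw [LinearMap.mem_ker, LinearMap.flip_apply, ← hac.neg, hcN (hsqN hu), neg_zero]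
    · show (mul a * mul a) b = 0
      rw [hsq, LinearMap.zero_apply]
    · show (mul b * mul a) b = 0
      rw [leftMul_anticomm mul hsq, LinearMap.neg_apply, Module.End.mul_apply, hac, map_zero,
        neg_zero]
  exact eq_bot_iff.mpr <| map₂_le.mpr fun x _ u hu =>
    leftIdealSpan_le_ker mul hsq (hxc x) (hsqN hu)

end AntiCommutative

theorem stmt_13_general (F : Type*) [Field F]
    (A : Type*) [AddCommGroup A] [Module F A] [FiniteDimensional F A]
    (mul : A →ₗ[F] A →ₗ[F] A)
    (hac : ∀ x : A, mul x x = 0)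
    (hcb : ∀ x y : A, mul x y = 0 → ∀ z : A, mul (mul x z) y = 0)
    (hdim : Module.finrank F (A ⧸ algSquare mul) = 2) :
    algCube mul = ⊥ ∧ ∀ x y z : A, mul x (mul y z) = 0 := by
  have hsq : ∀ x, mul x * mul x = 0 := fun x => LinearMap.ext fun z => by
    rw [Module.End.mul_apply, ← LinearMap.IsAlt.neg hac, hcb x x (hac x) z, neg_zero,
      LinearMap.zero_apply]
  obtain ⟨a, b, hab⟩ := exists_sup_span_pair_eq_top hdim
  have hA3 := map₂_algSquare_eq_bot hac hsq hab
  have hmul : ∀ x, ∀ u ∈ algSquare mul, mul x u = 0 := fun x u hu => by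
    simpa [hA3] using apply_mem_map₂ mul (mem_top (x := x)) hu
  refine ⟨eq_bot_iff.mpr <| span_le.mpr ?_, fun x y z => hmul x _ (subset_span ⟨y, z, rfl⟩)⟩
  rintro _ ⟨u, hu, y, rfl⟩
  rw [SetLike.mem_coe, mem_bot, ← LinearMap.IsAlt.neg hac, hmul y u hu, neg_zero]

/-- A finite-dimensional anti-commutative CB-algebra over a field of
characteristic different from 2 with `dim (A/A²) = 2` satisfies `A³ = 0`,
i.e. `x·(y·z) = 0` for all `x, y, z`. -/
theorem stmt_13 (F : Type*) [Field F] (h2 : (2 : F) ≠ 0)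
    (A : Type*) [AddCommGroup A] [Module F A] [FiniteDimensional F A]
    (mul : A →ₗ[F] A →ₗ[F] A)
    (hac : ∀ x : A, mul x x = 0)
    (hcb : ∀ x y : A, mul x y = 0 → ∀ z : A, mul (mul x z) y = 0)
    (hdim : Module.finrank F (A ⧸ algSquare mul) = 2) :
    algCube mul = ⊥ ∧ ∀ x y z : A, mul x (mul y z) = 0 :=
  stmt_13_general F A mul hac hcb hdim
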